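/- Let 1 < p < ∞, let n ∈ ℕ, and let a₁ = (α₁,β₁), …, aₙ = (αₙ,βₙ) be elements of the unit sphere of ℓ_p² such that α₁,…,αₙ ≥ 0 and β₁ ≥ β₂ ≥ … ≥ βₙ. Then for all signs θ₁,…,θₙ ∈ {−1,1}, the vector θ₁·(a₁+aₙ)/2 + θ₂·(a₂−a₁)/2 + ⋯ + θₙ·(aₙ−aₙ₋₁)/2 lies in the closed unit ball of ℓ_p². -/

import Mathlib

/-!
A unit vector of `ℓ_p²` with nonnegative first coordinate is `(g y, y)` for `g = lpSphereGraph p`,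
which is even, nonnegative and concave on `[-1, 1]`; concavity is the convexity of the unit ball.
Replacing `θ` by `-θ` we may take `θ₀ = 1`. The second and first coordinates `A`, `X` of the
combination are then the same sign combination of the antitone sequence `tᵢ` of second
coordinates and of `g tᵢ`. Adding the terms one at a time preserves
`lo ≤ A ≤ hi`, `X ≤ g A` and `g hi + g lo - g (hi + lo - A) ≤ X` (with `hi = t₀`, `lo` the last
`tᵢ`): every step is the concavity inequality `g (y + d) - g y ≤ g (x + d) - g x` for `x ≤ y`,
`0 ≤ d`. Evenness of `g` gives `g (hi + lo - A) ≤ g hi + g lo + g A`, hence `|X| ≤ g A`, which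
together with `|A| ≤ 1` says that the combination lies in the unit ball.
-/

open Set

section SignComb

variable {E F : Type*} [AddCommGroup E] [Module ℝ E] [AddCommGroup F] [Module ℝ F] {m : ℕ}

noncomputable def signComb (θ : Fin (m + 1) → ℝ) (a : Fin (m + 1) → E) : E :=
  θ 0 • ((2 : ℝ)⁻¹ • (a 0 + a (Fin.last m))) +
    ∑ i : Fin m, θ i.succ • ((2 : ℝ)⁻¹ • (a i.succ - a i.castSucc))

theorem signComb_neg (θ : Fin (m + 1) → ℝ) (a : Fin (m + 1) → E) :
    signComb (-θ) a = -signComb θ a := by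
  simp only [signComb, Pi.neg_apply, neg_smul, Finset.sum_neg_distrib]
  abel

theorem map_signComb (L : E →ₗ[ℝ] F) (θ : Fin (m + 1) → ℝ) (a : Fin (m + 1) → E) :
    L (signComb θ a) = signComb θ (L ∘ a) := by
  simp [signComb]

theorem signComb_fin_one (θ : Fin 1 → ℝ) (a : Fin 1 → E) : signComb θ a = θ 0 • a 0 := by
  simp [signComb, ← two_smul ℝ (a 0), smul_smul]

theorem signComb_succ (θ : Fin (m + 2) → ℝ) (a : Fin (m + 2) → E) :
    signComb θ a = signComb (fun i ↦ θ i.castSucc) (fun i ↦ a i.castSucc) +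
      (2⁻¹ * (θ 0 + θ (Fin.last (m + 1)))) • (a (Fin.last (m + 1)) - a (Fin.last m).castSucc) := by
  simp only [signComb, Fin.sum_univ_castSucc (n := m), Fin.succ_last, Fin.castSucc_zero,
    Fin.succ_castSucc]
  module

end SignComb

theorem ConcaveOn.sub_le_sub_of_le {s : Set ℝ} {g : ℝ → ℝ} (hg : ConcaveOn ℝ s g) {x y d : ℝ}
    (hx : x ∈ s) (hyd : y + d ∈ s) (hxy : x ≤ y) (hd : 0 ≤ d) :
    g (y + d) - g y ≤ g (x + d) - g x := by
  rcases (add_nonneg (sub_nonneg.2 hxy) hd).eq_or_lt with hL | hL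
  · obtain rfl : y = x := by linarith
    obtain rfl : d = 0 := by linarith
    simp
  set lam := d / (y - x + d)
  have hlam : lam * (y - x + d) = d := div_mul_cancel₀ d hL.ne'
  have hlam0 : 0 ≤ lam := div_nonneg hd hL.le
  have hlam1 : 0 ≤ 1 - lam := sub_nonneg.2 ((div_le_one hL).2 (by linarith))
  have h1 := hg.2 hx hyd hlam0 hlam1 (by ring)
  have h2 := hg.2 hx hyd hlam1 hlam0 (by ring)
  simp only [smul_eq_mul] at h1 h2
  rw [show lam * x + (1 - lam) * (y + d) = y by linear_combination -hlam] at h1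
  rw [show (1 - lam) * x + lam * (y + d) = x + d by linear_combination hlam] at h2
  linarith

structure AltSumBounds (g : ℝ → ℝ) (hi lo A X : ℝ) : Prop where
  lo_le : lo ≤ A
  le_hi : A ≤ hi
  le_apply : X ≤ g A
  apply_sub_le : g hi + g lo - g (hi + lo - A) ≤ X

namespace AltSumBounds

variable {s : Set ℝ} {g : ℝ → ℝ} {hi lo lo' A X : ℝ}

theorem self (g : ℝ → ℝ) (x : ℝ) : AltSumBounds g x x x (g x) :=
  ⟨le_rfl, le_rfl, le_rfl, by simp⟩

theorem of_le (hg : ConcaveOn ℝ s g) (h : AltSumBounds g hi lo A X) (hhi : hi ∈ s)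
    (hlo' : lo' ∈ s) (hle : lo' ≤ lo) : AltSumBounds g hi lo' A X := by
  refine ⟨hle.trans h.lo_le, h.le_hi, h.le_apply, ?_⟩
  have hmem : lo + (hi - A) ∈ s :=
    hg.1.ordConnected.out hlo' hhi ⟨by linarith [h.le_hi], by linarith [h.lo_le]⟩
  have := hg.sub_le_sub_of_le hlo' hmem hle (sub_nonneg.2 h.le_hi)
  have hX := h.apply_sub_le
  rw [show hi + lo - A = lo + (hi - A) by ring] at hX
  rw [show hi + lo' - A = lo' + (hi - A) by ring]
  linarith

theorem extend (hg : ConcaveOn ℝ s g) (h : AltSumBounds g hi lo A X) (hhi : hi ∈ s)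
    (hlo' : lo' ∈ s) (hle : lo' ≤ lo) :
    AltSumBounds g hi lo' (A + (lo' - lo)) (X + (g lo' - g lo)) := by
  refine ⟨by linarith [h.lo_le], by linarith [h.le_hi], ?_, ?_⟩
  · have hmem : lo + (A - lo) ∈ s :=
      hg.1.ordConnected.out hlo' hhi ⟨by linarith [h.lo_le], by linarith [h.le_hi]⟩
    have := hg.sub_le_sub_of_le hlo' hmem hle (sub_nonneg.2 h.lo_le)
    rw [add_sub_cancel, show lo' + (A - lo) = A + (lo' - lo) by ring] at this
    linarith [h.le_apply]
  · rw [show hi + lo' - (A + (lo' - lo)) = hi + lo - A by ring]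
    linarith [h.apply_sub_le]

end AltSumBounds

theorem ConcaveOn.altSumBounds_signComb {s : Set ℝ} {g : ℝ → ℝ} (hg : ConcaveOn ℝ s g) {m : ℕ}
    {t : Fin (m + 1) → ℝ} (ht : Antitone t) (hts : ∀ i, t i ∈ s) {θ : Fin (m + 1) → ℝ}
    (hθ0 : θ 0 = 1) (hθ : ∀ i, θ i = 1 ∨ θ i = -1) :
    AltSumBounds g (t 0) (t (Fin.last m)) (signComb θ t) (signComb θ (g ∘ t)) := by
  induction m with
  | zero => simpa [signComb_fin_one, hθ0] using AltSumBounds.self g (t 0)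
  | succ m ih =>
    have h := ih (t := fun i ↦ t i.castSucc) (θ := fun i ↦ θ i.castSucc)
      (ht.comp_monotone Fin.strictMono_castSucc.monotone) (fun i ↦ hts _) hθ0 (fun i ↦ hθ _)
    have hle : t (Fin.last (m + 1)) ≤ t (Fin.last m).castSucc := ht (Fin.le_last _)
    rw [signComb_succ, signComb_succ, hθ0]
    rcases hθ (Fin.last (m + 1)) with hθl | hθl <;> rw [hθl] <;> norm_num
    · exact h.extend hg (hts 0) (hts _) hle
    · exact h.of_le hg (hts 0) (hts _) hle

section Even

variable {g : ℝ → ℝ}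

theorem ConcaveOn.apply_le_of_abs_le (hg : ConcaveOn ℝ (Icc (-1) 1) g)
    (heven : ∀ x, g (-x) = g x) {x y : ℝ} (hxy : |x| ≤ |y|) (hy : |y| ≤ 1) : g y ≤ g x := by
  have hgy : g |y| = g y := by rcases abs_choice y with h | h <;> simp [h, heven]
  have hy' : |y| ∈ Icc (-1 : ℝ) 1 := ⟨by linarith [abs_nonneg y], hy⟩
  have := hg.min_le_of_mem_Icc ⟨by linarith, by linarith [abs_nonneg y]⟩ hy' (abs_le.mp hxy)
  rwa [heven, hgy, min_self] at this

theorem ConcaveOn.apply_add_sub_le (hg : ConcaveOn ℝ (Icc (-1) 1) g) (heven : ∀ x, g (-x) = g x)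
    (hg1 : 0 ≤ g 1) {lo A hi : ℝ} (hlo : -1 ≤ lo) (hloA : lo ≤ A) (hA : 0 ≤ A) (hAhi : A ≤ hi)
    (hhi : hi ≤ 1) : g (lo + (hi - A)) ≤ g lo + g A := by
  have hinc := hg.sub_le_sub_of_le (x := -1) (y := lo) (d := hi - A) ⟨le_rfl, by norm_num⟩
    ⟨by linarith, by linarith⟩ hlo (by linarith)
  have hmono : g (-1 + (hi - A)) ≤ g A := hg.apply_le_of_abs_le heven
    (by rw [abs_of_nonneg hA, abs_of_nonpos (by linarith)]; linarith)
    (abs_le.2 ⟨by linarith, by linarith⟩)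
  have hg_neg_one : 0 ≤ g (-1) := by rwa [heven]
  linarith

theorem AltSumBounds.abs_le_apply (hg : ConcaveOn ℝ (Icc (-1) 1) g) (heven : ∀ x, g (-x) = g x)
    (hg1 : 0 ≤ g 1) {hi lo A X : ℝ} (h : AltSumBounds g hi lo A X) (hlo : -1 ≤ lo)
    (hhi : hi ≤ 1) : |X| ≤ g A := by
  have hnonneg : ∀ x, |x| ≤ 1 → 0 ≤ g x := fun x hx ↦
    hg1.trans (hg.apply_le_of_abs_le heven (by simpa using hx) (by simp))
  have hZ : g (hi + lo - A) ≤ g hi + g lo + g A := by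
    rcases le_total 0 A with hA | hA
    · have := hg.apply_add_sub_le heven hg1 hlo h.lo_le hA h.le_hi hhi
      rw [show hi + lo - A = lo + (hi - A) by ring]
      linarith [hnonneg hi (abs_le.2 ⟨by linarith [h.lo_le, h.le_hi], hhi⟩)]
    · have := hg.apply_add_sub_le heven hg1 (neg_le_neg hhi) (neg_le_neg h.le_hi) (neg_nonneg.2 hA)
        (neg_le_neg h.lo_le) (by linarith)
      rw [heven, heven, show -hi + (-lo - -A) = -(hi + lo - A) by ring, heven] at this
      linarith [hnonneg lo (abs_le.2 ⟨hlo, by linarith [h.lo_le, h.le_hi]⟩)]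
  exact abs_le.2 ⟨by linarith [h.apply_sub_le], h.le_apply⟩

end Even

noncomputable def lpSphereGraph (p t : ℝ) : ℝ := (1 - |t| ^ p) ^ p⁻¹

section LpPlane

variable {p : ℝ}

theorem lpSphereGraph_nonneg {t : ℝ} (ht : |t| ≤ 1) (hp : 0 < p) : 0 ≤ lpSphereGraph p t :=
  Real.rpow_nonneg (sub_nonneg.2 (Real.rpow_le_one (abs_nonneg t) ht hp.le)) _

theorem lpSphereGraph_neg (p t : ℝ) : lpSphereGraph p (-t) = lpSphereGraph p t := by
  simp [lpSphereGraph]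

theorem abs_le_lpSphereGraph_iff {x t : ℝ} (hp : 0 < p) (ht : |t| ≤ 1) :
    |x| ≤ lpSphereGraph p t ↔ |x| ^ p + |t| ^ p ≤ 1 := by
  rw [lpSphereGraph, Real.le_rpow_inv_iff_of_pos (abs_nonneg x)
    (sub_nonneg.2 (Real.rpow_le_one (abs_nonneg t) ht hp.le)) hp]
  constructor <;> intro h <;> linarith

variable [Fact (1 ≤ ENNReal.ofReal p)]

variable (p) in
theorem pos_of_fact_one_le_ofReal : 0 < p :=
  zero_lt_one.trans_le (ENNReal.one_le_ofReal.1 Fact.out)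

theorem norm_rpow_eq_abs_rpow_add_abs_rpow (v : PiLp (ENNReal.ofReal p) (fun _ : Fin 2 ↦ ℝ)) :
    ‖v‖ ^ p = |v 0| ^ p + |v 1| ^ p := by
  have hp : 0 < p := pos_of_fact_one_le_ofReal p
  have hp' : (ENNReal.ofReal p).toReal = p := ENNReal.toReal_ofReal hp.le
  rw [PiLp.norm_eq_sum (by rwa [hp']) v, hp', Fin.sum_univ_two, one_div,
    Real.rpow_inv_rpow (by positivity) hp.ne']
  simp

theorem norm_le_one_iff_abs_le_lpSphereGraph (v : PiLp (ENNReal.ofReal p) (fun _ : Fin 2 ↦ ℝ)) :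
    ‖v‖ ≤ 1 ↔ |v 1| ≤ 1 ∧ |v 0| ≤ lpSphereGraph p (v 1) := by
  have hp : 0 < p := pos_of_fact_one_le_ofReal p
  have key : ‖v‖ ≤ 1 ↔ |v 0| ^ p + |v 1| ^ p ≤ 1 := by
    rw [← Real.rpow_le_rpow_iff (norm_nonneg v) zero_le_one hp, Real.one_rpow,
      norm_rpow_eq_abs_rpow_add_abs_rpow]
  rw [key]
  refine ⟨fun h ↦ ?_, fun h ↦ (abs_le_lpSphereGraph_iff hp h.1).1 h.2⟩
  have h1 : |v 1| ≤ 1 := by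
    have : |v 1| ^ p ≤ 1 := by linarith [Real.rpow_nonneg (abs_nonneg (v 0)) p]
    rwa [← Real.one_rpow p, Real.rpow_le_rpow_iff (abs_nonneg _) zero_le_one hp] at this
  exact ⟨h1, (abs_le_lpSphereGraph_iff hp h1).2 h⟩

theorem eq_lpSphereGraph_of_norm_eq_one {v : PiLp (ENNReal.ofReal p) (fun _ : Fin 2 ↦ ℝ)}
    (hv : ‖v‖ = 1) (hv0 : 0 ≤ v 0) : v 0 = lpSphereGraph p (v 1) := by
  have hp : 0 < p := pos_of_fact_one_le_ofReal p
  have h := norm_rpow_eq_abs_rpow_add_abs_rpow v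
  rw [hv, Real.one_rpow] at h
  rw [lpSphereGraph, show 1 - |v 1| ^ p = |v 0| ^ p by linarith,
    Real.rpow_rpow_inv (abs_nonneg _) hp.ne', abs_of_nonneg hv0]

variable (p) in
theorem concaveOn_lpSphereGraph : ConcaveOn ℝ (Icc (-1) 1) (lpSphereGraph p) := by
  have hp : 0 < p := pos_of_fact_one_le_ofReal p
  refine ⟨convex_Icc _ _, fun x hx y hy a b ha hb hab ↦ ?_⟩
  let u (z : ℝ) : PiLp (ENNReal.ofReal p) (fun _ : Fin 2 ↦ ℝ) :=
    WithLp.toLp _ ![lpSphereGraph p z, z]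
  have hu {z : ℝ} (hz : z ∈ Icc (-1) 1) : u z ∈ Metric.closedBall 0 1 := by
    have hz' : |z| ≤ 1 := abs_le.2 hz
    rw [mem_closedBall_zero_iff, norm_le_one_iff_abs_le_lpSphereGraph]
    simpa [u, abs_of_nonneg (lpSphereGraph_nonneg hz' hp)] using hz'
  have hab' := (convex_closedBall (0 : PiLp (ENNReal.ofReal p) (fun _ : Fin 2 ↦ ℝ)) 1)
    (hu hx) (hu hy) ha hb hab
  rw [mem_closedBall_zero_iff, norm_le_one_iff_abs_le_lpSphereGraph] at hab'
  simpa [u] using (le_abs_self _).trans hab'.2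

end LpPlane

theorem sign_combination_mem_closedBall (p : ℝ) [Fact (1 ≤ ENNReal.ofReal p)]
    (m : ℕ) (a : Fin (m + 1) → PiLp (ENNReal.ofReal p) (fun _ : Fin 2 => ℝ))
    (ha : ∀ i, ‖a i‖ = 1)
    (hα : ∀ i, 0 ≤ a i 0)
    (hβ : ∀ i j : Fin (m + 1), i ≤ j → a j 1 ≤ a i 1)
    (θ : Fin (m + 1) → ℝ) (hθ : ∀ i, θ i = 1 ∨ θ i = -1) :
    ‖θ 0 • ((2 : ℝ)⁻¹ • (a 0 + a (Fin.last m))) +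
      ∑ i : Fin m, θ i.succ • ((2 : ℝ)⁻¹ • (a i.succ - a i.castSucc))‖ ≤ 1 := by
  change ‖signComb θ a‖ ≤ 1
  wlog hθ0 : θ 0 = 1 generalizing θ
  · have hθ' : ∀ i, -θ i = 1 ∨ -θ i = -1 := fun i ↦ by rcases hθ i with h | h <;> simp [h]
    simpa [signComb_neg] using this (-θ) hθ' (by rcases hθ 0 with h | h <;> simp_all)
  set t : Fin (m + 1) → ℝ := fun i ↦ a i 1
  have hcoord (j : Fin 2) : signComb θ a j = signComb θ (fun i ↦ a i j) :=
    map_signComb (PiLp.projₗ (𝕜 := ℝ) _ _ j) θ a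
  have hgt : (fun i ↦ a i 0) = lpSphereGraph p ∘ t :=
    funext fun i ↦ eq_lpSphereGraph_of_norm_eq_one (ha i) (hα i)
  have ht1 (i : Fin (m + 1)) : t i ∈ Icc (-1) 1 :=
    abs_le.1 ((norm_le_one_iff_abs_le_lpSphereGraph (a i)).1 (ha i).le).1
  have hbounds :=
    (concaveOn_lpSphereGraph p).altSumBounds_signComb (fun _ _ ↦ hβ _ _) ht1 hθ0 hθ
  rw [norm_le_one_iff_abs_le_lpSphereGraph, hcoord, hcoord, hgt]
  exact ⟨abs_le.2 ⟨(ht1 _).1.trans hbounds.lo_le, hbounds.le_hi.trans (ht1 0).2⟩,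
    hbounds.abs_le_apply (concaveOn_lpSphereGraph p) (lpSphereGraph_neg p)
      (lpSphereGraph_nonneg (by simp) (pos_of_fact_one_le_ofReal p)) (ht1 _).1 (ht1 0).2⟩
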